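/- arXiv:1811.11544 — 3 statements merged into one kernel-verified Lean document; each statement's English description precedes it below -/
import Mathlib

section
/- Let G be a group and K a field of characteristic 0 with algebraic closure K̄. Let ρ : G → GL_n(K̄) be a semisimple representation with irreducible decomposition ρ ≅ ρ₁ ⊕ ⋯ ⊕ ρ_r. Assume: (i) ρ is defined over some finite extension of K inside K̄; (ii) Tr ρ(g) ∈ K for every g ∈ G; (iii) there exists g₀ ∈ G such that the characteristic polynomial of ρ(g₀) has n distinct roots, all lying in K. Then each irreducible component ρ_i (1 ≤ i ≤ r) is defined over K. -/
/-!
Conjugate each `ρᵢ` so that `ρᵢ(g₀)` becomes diagonal; the direct sum `ρ'` of the conjugates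
then has `ρ'(g₀)` diagonal with distinct eigenvalues in `K`. The `K`-span of `ρ'(G)` is a
`K`-algebra on which the trace takes values in `K`, and it contains the diagonal matrix units
`E_jj` as Lagrange polynomials in `ρ'(g₀)`. Taking the trace of
`E_jj ρ'(g) E_kk ρ'(h) E_ll ρ'(f)` shows that every cyclic product
`ρ'(g)_jk ρ'(h)_kl ρ'(f)_lj` lies in `K`. No matrix entry of an irreducible block vanishes
identically, so after fixing `j₀` and rescaling the basis by `d_a = ρᵢ(g_a)_{j₀ a} ≠ 0`, every
entry `d_a ρᵢ(g)_{ab} / d_b` is a quotient of two such cyclic products.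
-/

open Matrix Polynomial

/-- A matrix representation `ρ : G → GLₙ(F)` is *defined over* a subfield `E ⊆ F` if some
single conjugate of it has all matrix entries in `E`. -/
def MatRep.IsDefinedOver {G : Type*} [Group G] {F : Type*} [Field F] {ι : Type*}
    [Fintype ι] [DecidableEq ι]
    (ρ : G →* Matrix.GeneralLinearGroup ι F) (E : Subfield F) : Prop :=
  ∃ M : Matrix.GeneralLinearGroup ι F,
    ∀ (g : G) (i j : ι),
      ((M * ρ g * M⁻¹ : Matrix.GeneralLinearGroup ι F) : Matrix ι ι F) i j ∈ E

/-- A matrix representation is *irreducible* if the underlying space is nonzero and the only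
`G`-invariant subspaces (for the `mulVec` action) are `⊥` and `⊤`. -/
def MatRep.IsIrreducible {G : Type*} [Group G] {F : Type*} [Field F] {ι : Type*}
    [Fintype ι] [DecidableEq ι]
    (ρ : G →* Matrix.GeneralLinearGroup ι F) : Prop :=
  Nonempty ι ∧
    ∀ p : Submodule F (ι → F),
      (∀ g : G, ∀ v ∈ p, ((ρ g : Matrix ι ι F)).mulVec v ∈ p) → p = ⊥ ∨ p = ⊤

namespace Matrix

theorem trace_reindex {R : Type*} [AddCommMonoid R] {m n : Type*} [Fintype m] [Fintype n]
    (e : m ≃ n) (A : Matrix m m R) : (reindex e e A).trace = A.trace :=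
  e.symm.sum_comp A.diag

section BlockDiagonal

variable {R : Type*} [CommRing R] {ι : Type*} [Fintype ι] [DecidableEq ι] {κ : ι → Type*}
  [∀ i, Fintype (κ i)] [∀ i, DecidableEq (κ i)]

theorem det_blockDiagonal' (A : ∀ i, Matrix (κ i) (κ i) R) :
    (blockDiagonal' A).det = ∏ i, (A i).det := by
  -- any linear order on the blocks makes `blockDiagonal' A` block triangular
  let : LinearOrder ι := LinearOrder.lift' _ (Fintype.equivFin ι).injective
  rw [(blockTriangular_blockDiagonal' A).det_fintype]
  refine Finset.prod_congr rfl fun i _ => ?_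
  refine (det_submatrix_equiv_self (Equiv.sigmaSubtype i).symm (R := R) _).symm.trans ?_
  congr 1
  ext a b
  exact blockDiagonal'_apply_eq A i a b

theorem charmatrix_blockDiagonal' (A : ∀ i, Matrix (κ i) (κ i) R) :
    charmatrix (blockDiagonal' A) = blockDiagonal' fun i => charmatrix (A i) := by
  ext ⟨i, a⟩ ⟨j, b⟩
  by_cases h : i = j
  · subst h
    simp [charmatrix_apply, blockDiagonal'_apply_eq, diagonal_apply]
  · simp [blockDiagonal'_apply_ne _ _ _ h, h]

theorem charpoly_blockDiagonal' (A : ∀ i, Matrix (κ i) (κ i) R) :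
    (blockDiagonal' A).charpoly = ∏ i, (A i).charpoly := by
  rw [charpoly, charmatrix_blockDiagonal', det_blockDiagonal']
  rfl

end BlockDiagonal

section Field

variable {K : Type*} [Field K] {κ : Type*} [Fintype κ] [DecidableEq κ]

theorem exists_conj_eq_diagonal (A : Matrix κ κ K) (ν : κ → K) (hν : Function.Injective ν)
    (hroot : ∀ a, A.charpoly.IsRoot (ν a)) :
    ∃ Q : GL κ K, (Q : Matrix κ κ K) * A * ((Q⁻¹ : GL κ K) : Matrix κ κ K) = diagonal ν := by
  have hvec : ∀ a, ∃ v, Module.End.HasEigenvector A.mulVecLin (ν a) v := fun a =>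
    ((Module.End.hasEigenvalue_iff_isRoot_charpoly _ _).2
      (by rw [charpoly_mulVecLin]; exact hroot a)).exists_hasEigenvector
  choose v hv using hvec
  have hQ : IsUnit (of v)ᵀ := linearIndependent_cols_iff_isUnit.1
    (Module.End.eigenvectors_linearIndependent' _ ν hν v hv)
  refine ⟨hQ.unit⁻¹, ?_⟩
  rw [inv_inv, mul_assoc, Units.inv_mul_eq_iff_eq_mul, IsUnit.unit_spec]
  ext i a
  rw [mul_diagonal]
  simpa [mul_apply, mulVec, dotProduct, mul_comm] using congrFun (hv a).apply_eq_smul i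

end Field

end Matrix

namespace Polynomial

variable {F : Type*} [Field F] [IsAlgClosed F] {ι : Type*} [Fintype ι] {κ : ι → Type*}
  [∀ i, Fintype (κ i)]

theorem exists_injective_roots_of_prod_eq (p : ι → F[X])
    (hdeg : ∀ i, (p i).natDegree = Fintype.card (κ i)) (s : Finset F)
    (hprod : ∏ i, p i = ∏ a ∈ s, (X - C a)) :
    ∃ ν : (Σ i, κ i) → F,
      Function.Injective ν ∧ (∀ x, (p x.1).IsRoot (ν x)) ∧ ∀ x, ν x ∈ s := by
  classical
  have hne : ∏ i, p i ≠ 0 := hprod ▸ (monic_prod_of_monic _ _ fun a _ => monic_X_sub_C a).ne_zero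
  have hbind : (Finset.univ.val.bind fun i => (p i).roots) = s.val := by
    rw [← roots_prod _ _ hne, hprod, roots_prod_X_sub_C]
  obtain ⟨hnodup, hdisj⟩ := Multiset.nodup_bind.1 (hbind ▸ s.nodup)
  have hcard : ∀ i, Fintype.card (κ i) = Fintype.card (p i).roots.toFinset := fun i => by
    rw [Fintype.card_coe, Multiset.toFinset_card_of_nodup (hnodup i (Finset.mem_univ i)),
      IsAlgClosed.card_roots_eq_natDegree, hdeg]
  let enum i : κ i ≃ (p i).roots.toFinset := Fintype.equivOfCardEq (hcard i)
  have hmem : ∀ i a, (enum i a : F) ∈ (p i).roots := fun i a => Multiset.mem_toFinset.1 (enum i a).2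
  refine ⟨fun x => enum x.1 x.2, ?_, fun x => isRoot_of_mem_roots (hmem x.1 x.2), fun x => ?_⟩
  · rintro ⟨i, a⟩ ⟨j, b⟩ (h : (enum i a : F) = enum j b)
    obtain rfl : i = j := by
      by_contra hij
      exact Multiset.disjoint_left.1 (hdisj.forall (Finset.mem_univ i) (Finset.mem_univ j) hij)
        (hmem i a) (h ▸ hmem j b)
    simpa using (enum i).injective (Subtype.ext h)
  · rw [← Finset.mem_val, ← hbind]
    exact Multiset.mem_bind.2 ⟨x.1, Finset.mem_univ _, hmem x.1 x.2⟩

end Polynomial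

namespace Matrix

theorem exists_conj_eq_diagonal_of_prod_charpoly {F : Type*} [Field F] [IsAlgClosed F]
    {ι : Type*} [Fintype ι] {κ : ι → Type*} [∀ i, Fintype (κ i)] [∀ i, DecidableEq (κ i)]
    (A : ∀ i, Matrix (κ i) (κ i) F) (s : Finset F)
    (h : ∏ i, (A i).charpoly = ∏ a ∈ s, (X - C a)) :
    ∃ (Q : ∀ i, GL (κ i) F) (ν : (Σ i, κ i) → F), Function.Injective ν ∧ (∀ x, ν x ∈ s) ∧
      ∀ i, (Q i : Matrix (κ i) (κ i) F) * A i * ((Q i)⁻¹ : GL (κ i) F) =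
        diagonal fun a => ν ⟨i, a⟩ := by
  obtain ⟨ν, hν, hroot, hs⟩ :=
    exists_injective_roots_of_prod_eq (κ := κ) _ (fun i => by simp [charpoly_natDegree_eq_dim]) s h
  choose Q hQ using fun i => exists_conj_eq_diagonal (A i) (fun a => ν ⟨i, a⟩)
    (hν.comp sigma_mk_injective) (fun a => hroot ⟨i, a⟩)
  exact ⟨Q, ν, hν, hs, hQ⟩

variable {F : Type*} [Field F] {N : Type*} [Fintype N] [DecidableEq N]

theorem aeval_diagonal {R : Type*} [CommSemiring R] [Algebra R F] (d : N → F) (q : R[X]) :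
    aeval (diagonal d) q = diagonal fun l => aeval (d l) q := by
  simpa [aeval_pi_apply] using aeval_algHom_apply (diagonalAlgHom R) d q

theorem single_eq_aeval_lagrange_basis {E : Subfield F} (μ : N → E) (hμ : Function.Injective μ)
    (j : N) : single j j (1 : F) = aeval (diagonal fun l => (μ l : F))
      (Lagrange.basis Finset.univ μ j) := by
  rw [aeval_diagonal]
  ext a b
  rcases eq_or_ne a b with rfl | hab
  · rw [diagonal_apply_eq, show (μ a : F) = algebraMap E F (μ a) from rfl,
      aeval_algebraMap_apply_eq_algebraMap_eval]
    rcases eq_or_ne j a with rfl | hja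
    · simp [Lagrange.eval_basis_self hμ.injOn (Finset.mem_univ j)]
    · simp [Lagrange.eval_basis_of_ne hja (Finset.mem_univ a), hja]
  · rw [diagonal_apply_ne _ hab]
    exact single_apply_of_ne _ _ _ _ _ fun h => hab (h.1.symm.trans h.2)

theorem mul_mul_mem_of_trace_mem {G : Type*} [Monoid G] (E : Subfield F)
    (y : G →* Matrix N N F) (htr : ∀ g, (y g).trace ∈ E) (g₀ : G) (μ : N → E)
    (hμ : Function.Injective μ) (hy : y g₀ = diagonal fun l => (μ l : F))
    (g h f : G) (j k l : N) : y g j k * y h k l * y f l j ∈ E := by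
  let A := Algebra.adjoin E (Set.range y)
  have hyA : ∀ g, y g ∈ A := fun g => Algebra.subset_adjoin ⟨g, rfl⟩
  have htrA : ∀ X ∈ A, X.trace ∈ E := by
    intro X hX
    rw [← Subalgebra.mem_toSubmodule, Algebra.adjoin_eq_span, ← MonoidHom.coe_mrange,
      Submonoid.closure_eq, MonoidHom.coe_mrange] at hX
    induction hX using Submodule.span_induction with
    | mem x hx => obtain ⟨g, rfl⟩ := hx; exact htr g
    | zero => simp
    | add X Y _ _ hX hY => rw [trace_add]; exact add_mem hX hY
    | smul c X _ hX => rw [trace_smul]; exact mul_mem c.2 hX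
  have hsingle : ∀ j, single j j (1 : F) ∈ A := fun j => by
    rw [single_eq_aeval_lagrange_basis μ hμ, ← hy]
    exact Algebra.adjoin_mono (Set.singleton_subset_iff.2 (Set.mem_range_self g₀))
      (aeval_mem_adjoin_singleton E _)
  have hcorner : ∀ g j k, single j k (y g j k) ∈ A := fun g j k => by
    simpa using mul_mem (mul_mem (hsingle j) (hyA g)) (hsingle k)
  simpa using htrA _ (mul_mem (mul_mem (hcorner g j k) (hcorner h k l)) (hcorner f l j))

end Matrix

namespace MatRep

variable {G : Type*} [Group G] {F : Type*} [Field F]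

section DirectSum

variable {ι : Type*} [Fintype ι] [DecidableEq ι] {κ : ι → Type*} [∀ i, Fintype (κ i)]
  [∀ i, DecidableEq (κ i)]

def directSum (τ : ∀ i, G →* GL (κ i) F) : G →* Matrix (Σ i, κ i) (Σ i, κ i) F :=
  (blockDiagonal'RingHom κ F).toMonoidHom.comp (MonoidHom.pi fun i => (Units.coeHom _).comp (τ i))

theorem directSum_apply (τ : ∀ i, G →* GL (κ i) F) (g : G) :
    directSum τ g = blockDiagonal' fun i => (τ i g : Matrix (κ i) (κ i) F) :=
  rfl

end DirectSum

variable {ι : Type*} [Fintype ι] [DecidableEq ι] {σ : G →* GL ι F}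

theorem IsIrreducible.exists_apply_mulVec_ne_zero (hσ : IsIrreducible σ) {v : ι → F}
    (hv : v ≠ 0) {φ : (ι → F) →ₗ[F] F} (hφ : φ ≠ 0) :
    ∃ g, φ ((σ g : Matrix ι ι F) *ᵥ v) ≠ 0 := by
  by_contra! h
  let p := Submodule.span F (Set.range fun g => (σ g : Matrix ι ι F) *ᵥ v)
  have hinv : ∀ g, ∀ w ∈ p, (σ g : Matrix ι ι F) *ᵥ w ∈ p := fun g w hw => by
    refine (Submodule.map_span_le _ _ _).2 ?_
      (Submodule.mem_map_of_mem (f := (σ g : Matrix ι ι F).mulVecLin) hw)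
    rintro _ ⟨h, rfl⟩
    exact Submodule.subset_span ⟨g * h, by simp [mulVec_mulVec]⟩
  have hvp : v ∈ p := Submodule.subset_span ⟨1, by simp⟩
  have hpφ : p ≤ LinearMap.ker φ := Submodule.span_le.2 (by rintro _ ⟨g, rfl⟩; exact h g)
  rcases hσ.2 p hinv with hbot | htop
  · exact hv ((Submodule.mem_bot F).1 (hbot ▸ hvp))
  · exact hφ (LinearMap.ker_eq_top.1 (top_le_iff.1 (htop ▸ hpφ)))

theorem IsIrreducible.exists_conj_apply_ne_zero (hσ : IsIrreducible σ) (Q : GL ι F) (a b : ι) :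
    ∃ g, (((MulAut.conj Q).toMonoidHom.comp σ) g : Matrix ι ι F) a b ≠ 0 := by
  have hQ : ∀ v, (Q : Matrix ι ι F) *ᵥ ((Q⁻¹ : GL ι F) : Matrix ι ι F) *ᵥ v = v := fun v => by
    rw [mulVec_mulVec, Units.mul_inv, one_mulVec]
  let φ := (LinearMap.proj a).comp (Q : Matrix ι ι F).mulVecLin
  have hv : (Q⁻¹ : GL ι F).val *ᵥ Pi.single b 1 ≠ 0 := fun h => by
    simpa only [hQ, mulVec_zero, Pi.single_eq_zero_iff, one_ne_zero] using
      congrArg ((Q : Matrix ι ι F) *ᵥ ·) h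
  have hφ : φ ≠ 0 := fun h => by
    simpa only [φ, LinearMap.comp_apply, mulVecLin_apply, hQ, LinearMap.proj_apply,
      Pi.single_eq_same, LinearMap.zero_apply, one_ne_zero] using
        LinearMap.congr_fun h ((Q⁻¹ : GL ι F).val *ᵥ Pi.single a 1)
  obtain ⟨g, hg⟩ := hσ.exists_apply_mulVec_ne_zero hv hφ
  refine ⟨g, ?_⟩
  rw [LinearMap.comp_apply, mulVecLin_apply, mulVec_mulVec, mulVec_mulVec, mulVec_single_one]
    at hg
  simpa using hg

theorem IsDefinedOver.of_conj (Q : GL ι F) {E : Subfield F}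
    (h : IsDefinedOver ((MulAut.conj Q).toMonoidHom.comp σ) E) : IsDefinedOver σ E := by
  obtain ⟨M, hM⟩ := h
  exact ⟨M * Q, fun g => by simpa [mul_assoc] using hM g⟩

theorem isDefinedOver_of_mul_mul_mem [Nonempty ι] (E : Subfield F)
    (hne : ∀ a b, ∃ g, (σ g : Matrix ι ι F) a b ≠ 0)
    (hcyc : ∀ (g h f : G) (j k l : ι),
      (σ g : Matrix ι ι F) j k * (σ h : Matrix ι ι F) k l * (σ f : Matrix ι ι F) l j ∈ E) :
    IsDefinedOver σ E := by
  obtain ⟨j₀⟩ := ‹Nonempty ι›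
  choose g₁ hg₁ using fun a => hne j₀ a
  choose g₂ hg₂ using fun a => hne a j₀
  set d : ι → F := fun a => (σ (g₁ a) : Matrix ι ι F) j₀ a
  have hd : ∀ a, d a ≠ 0 := hg₁
  let D : GL ι F := ⟨diagonal d, diagonal d⁻¹, by simp [hd], by simp [hd]⟩
  refine ⟨D, fun g a b => ?_⟩
  have hloop : ∀ a, d a * (σ (g₂ a) : Matrix ι ι F) a j₀ ∈ E := fun a => by
    simpa using hcyc (g₁ a) (g₂ a) 1 j₀ a j₀
  have hentry : ((D * σ g * D⁻¹ : GL ι F) : Matrix ι ι F) a b =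
      d a * (σ g : Matrix ι ι F) a b / d b := by
    simp [D, div_eq_mul_inv]
  -- multiplying by `σ (g₂ b) b j₀` makes numerator and denominator cyclic products
  rw [hentry, ← mul_div_mul_right _ _ (hg₂ b)]
  exact div_mem (hcyc _ _ _ j₀ a b) (hloop b)

end MatRep

theorem each_component_defined_over_base_general
    {G : Type*} [Group G] {K : Type*} [Field K] {n r : ℕ}
    (ρ : G →* Matrix.GeneralLinearGroup (Fin n) (AlgebraicClosure K))
    (m : Fin r → ℕ)
    (ρi : (i : Fin r) → G →* Matrix.GeneralLinearGroup (Fin (m i)) (AlgebraicClosure K))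
    (hirr : ∀ i, MatRep.IsIrreducible (ρi i))
    (e : (Σ i : Fin r, Fin (m i)) ≃ Fin n)
    (M : Matrix.GeneralLinearGroup (Fin n) (AlgebraicClosure K))
    (hdecomp : ∀ g : G,
      (ρ g : Matrix (Fin n) (Fin n) (AlgebraicClosure K)) =
        (M : Matrix (Fin n) (Fin n) (AlgebraicClosure K)) *
          (Matrix.reindex e e
            (Matrix.blockDiagonal' fun i =>
              ((ρi i g : Matrix (Fin (m i)) (Fin (m i)) (AlgebraicClosure K))))) *
          ((M⁻¹ : Matrix.GeneralLinearGroup (Fin n) (AlgebraicClosure K)) :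
            Matrix (Fin n) (Fin n) (AlgebraicClosure K)))
    (htr : ∀ g : G,
      (ρ g : Matrix (Fin n) (Fin n) (AlgebraicClosure K)).trace ∈
        (algebraMap K (AlgebraicClosure K)).fieldRange)
    (g₀ : G)
    (hg₀ : ∃ roots : Fin n → AlgebraicClosure K, Function.Injective roots ∧
      (∀ i, roots i ∈ (algebraMap K (AlgebraicClosure K)).fieldRange) ∧
      (ρ g₀ : Matrix (Fin n) (Fin n) (AlgebraicClosure K)).charpoly =
        ∏ i, (X - C (roots i))) :
    ∀ i : Fin r,
      MatRep.IsDefinedOver (ρi i) ((algebraMap K (AlgebraicClosure K)).fieldRange) := by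
  classical
  set F := AlgebraicClosure K
  set E := (algebraMap K F).fieldRange
  obtain ⟨root, hroot, hrootE, hchar⟩ := hg₀
  have hprod : ∏ i, (ρi i g₀ : Matrix (Fin (m i)) (Fin (m i)) F).charpoly =
      ∏ a ∈ Finset.univ.image root, (X - C a) := by
    rw [Finset.prod_image hroot.injOn, ← hchar, hdecomp, coe_units_inv, charpoly_units_conj,
      charpoly_reindex, charpoly_blockDiagonal']
  obtain ⟨Q, ν, hν, hνs, hQ⟩ := exists_conj_eq_diagonal_of_prod_charpoly _ _ hprod
  have hνE : ∀ x, ν x ∈ E := fun x => by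
    obtain ⟨j, -, hj⟩ := Finset.mem_image.1 (hνs x)
    exact hj ▸ hrootE j
  let τ i := (MulAut.conj (Q i)).toMonoidHom.comp (ρi i)
  have htrτ : ∀ g, (MatRep.directSum τ g).trace ∈ E := fun g => by
    convert htr g using 1
    rw [hdecomp, trace_units_conj, trace_reindex, MatRep.directSum_apply, trace_blockDiagonal',
      trace_blockDiagonal']
    exact Fintype.sum_congr _ _ fun i => trace_units_conj (Q i) _
  have hτg₀ : MatRep.directSum τ g₀ = diagonal fun x => ((⟨ν x, hνE x⟩ : E) : F) := by
    rw [MatRep.directSum_apply]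
    convert blockDiagonal'_diagonal fun i a => ν ⟨i, a⟩ using 2
    exact funext hQ
  intro i
  have : Nonempty (Fin (m i)) := (hirr i).1
  refine MatRep.IsDefinedOver.of_conj (Q i) (MatRep.isDefinedOver_of_mul_mul_mem E
    ((hirr i).exists_conj_apply_ne_zero (Q i)) fun g h f j k l => ?_)
  simpa only [MatRep.directSum_apply, blockDiagonal'_apply_eq] using
    mul_mul_mem_of_trace_mem E _ htrτ g₀ _ (fun x x' h => hν (congrArg Subtype.val h)) hτg₀
      g h f ⟨i, j⟩ ⟨i, k⟩ ⟨i, l⟩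

/-- **Lemma (each irreducible component is defined over `K`).**
Let `K` be a field of characteristic `0` with algebraic closure `K̄`, and let
`ρ : G → GLₙ(K̄)` be a representation which is (conjugate to) a direct sum of irreducible
representations `ρ₁ ⊕ ⋯ ⊕ ρᵣ`.  Assume `ρ` is defined over a finite extension of `K`
inside `K̄`, all traces of `ρ` lie in `K`, and some `ρ(g₀)` has characteristic polynomial
with `n` distinct roots all lying in `K`.  Then each `ρᵢ` is defined over `K`. -/
theorem each_component_defined_over_base
    {G : Type*} [Group G] {K : Type*} [Field K] [CharZero K] {n r : ℕ}
    (ρ : G →* Matrix.GeneralLinearGroup (Fin n) (AlgebraicClosure K))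
    (m : Fin r → ℕ)
    (ρi : (i : Fin r) → G →* Matrix.GeneralLinearGroup (Fin (m i)) (AlgebraicClosure K))
    (hirr : ∀ i, MatRep.IsIrreducible (ρi i))
    (e : (Σ i : Fin r, Fin (m i)) ≃ Fin n)
    (M : Matrix.GeneralLinearGroup (Fin n) (AlgebraicClosure K))
    (hdecomp : ∀ g : G,
      (ρ g : Matrix (Fin n) (Fin n) (AlgebraicClosure K)) =
        (M : Matrix (Fin n) (Fin n) (AlgebraicClosure K)) *
          (Matrix.reindex e e
            (Matrix.blockDiagonal' fun i =>
              ((ρi i g : Matrix (Fin (m i)) (Fin (m i)) (AlgebraicClosure K))))) *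
          ((M⁻¹ : Matrix.GeneralLinearGroup (Fin n) (AlgebraicClosure K)) :
            Matrix (Fin n) (Fin n) (AlgebraicClosure K)))
    (hfin : ∃ E : IntermediateField K (AlgebraicClosure K),
      FiniteDimensional K E ∧ MatRep.IsDefinedOver ρ E.toSubfield)
    (htr : ∀ g : G,
      (ρ g : Matrix (Fin n) (Fin n) (AlgebraicClosure K)).trace ∈
        (algebraMap K (AlgebraicClosure K)).fieldRange)
    (g₀ : G)
    (hg₀ : ∃ roots : Fin n → AlgebraicClosure K, Function.Injective roots ∧
      (∀ i, roots i ∈ (algebraMap K (AlgebraicClosure K)).fieldRange) ∧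
      (ρ g₀ : Matrix (Fin n) (Fin n) (AlgebraicClosure K)).charpoly =
        ∏ i, (X - C (roots i))) :
    ∀ i : Fin r,
      MatRep.IsDefinedOver (ρi i) ((algebraMap K (AlgebraicClosure K)).fieldRange) :=
  each_component_defined_over_base_general ρ m ρi hirr e M hdecomp htr g₀ hg₀
end

section
/- Let G be a group and K a field of characteristic 0 with algebraic closure K̄. Let ρ : G → GL_n(K̄) be a semisimple representation. Assume: (i) ρ is defined over some finite extension of K inside K̄; (ii) Tr ρ(g) ∈ K for every g ∈ G; (iii) there exists g₀ ∈ G such that the characteristic polynomial of ρ(g₀) has n distinct roots, all lying in K. Then ρ itself is defined over K. -/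
open Matrix Polynomial

/-! Conjugating by an eigenbasis of `ρ g₀` makes it diagonal with distinct eigenvalues in `K`, so
Lagrange interpolation puts the diagonal matrix units `Eᵢ` into the `K`-algebra `A` spanned by
`ρ(G)`, on which all traces lie in `K`. As `Eᵢ a Eⱼ = aᵢⱼ Eᵢⱼ`, we get
`aᵢⱼ bⱼᵢ = tr (Eᵢ a Eⱼ b) ∈ K` for `a, b ∈ A`. Semisimplicity makes `A` semiprime, which forces the
pattern of indices `(i, j)` with `aᵢⱼ ≠ 0` for some `a ∈ A` to be symmetric, hence an equivalence
relation. Fix a base index `r` in each class and some `dⱼ = cᵣⱼ ≠ 0` with `c ∈ A`. Then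
`dᵢ aᵢⱼ / dⱼ` is a ratio of `(r, j)` entries of two elements of `A`, and such a ratio lies in `K`
since multiplying both entries by a nonzero `bⱼᵣ`, `b ∈ A`, gives two elements of `K`. -/

theorem Matrix.exists_units_conj_eq_diagonal {F : Type*} [Field F] {ι : Type*} [Fintype ι]
    [DecidableEq ι] (A : Matrix ι ι F) (μ : ι → F) (hμ : Function.Injective μ)
    (hroot : ∀ i, A.charpoly.IsRoot (μ i)) :
    ∃ P : (Matrix ι ι F)ˣ, (P⁻¹ : (Matrix ι ι F)ˣ) * A * P = diagonal μ := by
  have hev : ∀ i, Module.End.HasEigenvalue (toLin' A) (μ i) := fun i =>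
    (Module.End.hasEigenvalue_iff_isRoot_charpoly _ _).2 (by rw [charpoly_toLin']; exact hroot i)
  choose v hv using fun i => (hev i).exists_hasEigenvector
  let b := basisOfLinearIndependentOfCardEqFinrank' v
    (Module.End.eigenvectors_linearIndependent' _ μ hμ v hv)
    (Module.finrank_fintype_fun_eq_card F).symm
  let π := Pi.basisFun F ι
  refine ⟨⟨π.toMatrix b, b.toMatrix π, π.toMatrix_mul_toMatrix_flip b,
    b.toMatrix_mul_toMatrix_flip π⟩, ?_⟩
  have h := basis_toMatrix_mul_linearMap_toMatrix_mul_basis_toMatrix (b := b) (b' := π) (c := b)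
    (c' := π) (toLin' A)
  rw [LinearMap.toMatrix_eq_toMatrix', LinearMap.toMatrix'_toLin'] at h
  refine h.trans ?_
  have hb : ∀ j, toLin' A (b j) = μ j • b j := by simpa [b] using fun j => (hv j).apply_eq_smul
  ext i j
  by_cases h : i = j <;> simp [LinearMap.toMatrix_apply, hb, h]

def Subalgebra.IsSemiprime {K B : Type*} [CommSemiring K] [Semiring B] [Algebra K B]
    (A : Subalgebra K B) : Prop :=
  ∀ x ∈ A, (∀ a ∈ A, x * a * x = 0) → x = 0

namespace Matrix

variable {K F : Type*} [Field K] [Field F] [Algebra K F] {ι : Type*} [Fintype ι] [DecidableEq ι]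
  {A : Subalgebra K (Matrix ι ι F)}

theorem single_one_mem_of_diagonal_mem {μ : ι → K} (hμ : Function.Injective μ)
    (hA : diagonal (fun i => algebraMap K F (μ i)) ∈ A) (i : ι) : single i i (1 : F) ∈ A := by
  have h : aeval (diagonal fun j => algebraMap K F (μ j)) (Lagrange.basis Finset.univ μ i) =
      single i i 1 := by
    rw [← diagonalAlgHom_apply K, aeval_algHom_apply]
    ext j k
    by_cases hji : j = i
    · subst hji
      simp [diagonal_apply, single_apply, aeval_pi_apply₂, aeval_algebraMap_apply,
        Lagrange.eval_basis_self hμ.injOn (Finset.mem_univ j)]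
    · simp [diagonal_apply, aeval_pi_apply₂, aeval_algebraMap_apply,
        Lagrange.eval_basis_of_ne (Ne.symm hji) (Finset.mem_univ j), Ne.symm hji]
  exact h ▸ Algebra.adjoin_singleton_le hA (aeval_mem_adjoin_singleton K _)

theorem single_apply_mem_of_single_one_mem (hA : ∀ i, single i i (1 : F) ∈ A)
    {a : Matrix ι ι F} (ha : a ∈ A) (i j : ι) : single i j (a i j) ∈ A := by
  simpa using mul_mem (mul_mem (hA i) ha) (hA j)

theorem mul_apply_mem_fieldRange (hA : ∀ i, single i i (1 : F) ∈ A)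
    (htr : ∀ a ∈ A, trace a ∈ (algebraMap K F).fieldRange) {a b : Matrix ι ι F} (ha : a ∈ A)
    (hb : b ∈ A) (i j : ι) : a i j * b j i ∈ (algebraMap K F).fieldRange := by
  simpa [trace_single_mul] using htr _ (mul_mem (single_apply_mem_of_single_one_mem hA ha i j) hb)

theorem exists_apply_ne_zero_swap (hA : ∀ i, single i i (1 : F) ∈ A) (hsp : A.IsSemiprime)
    {a : Matrix ι ι F} (ha : a ∈ A) {i j : ι} (hij : a i j ≠ 0) : ∃ b ∈ A, b j i ≠ 0 := by
  by_contra! h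
  have := hsp _ (single_apply_mem_of_single_one_mem hA ha i j) fun b hb => by simp [h b hb]
  exact hij (by simpa using congr_fun₂ this i j)

def supportSetoid (hA : ∀ i, single i i (1 : F) ∈ A) (hsp : A.IsSemiprime) : Setoid ι where
  r i j := ∃ a ∈ A, a i j ≠ 0
  iseqv :=
    { refl i := ⟨_, hA i, by simp⟩
      symm := fun ⟨_, ha, hij⟩ => exists_apply_ne_zero_swap hA hsp ha hij
      trans := fun {i j k} ⟨a, ha, hij⟩ ⟨b, hb, hjk⟩ =>
        ⟨_, mul_mem (single_apply_mem_of_single_one_mem hA ha i j)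
          (single_apply_mem_of_single_one_mem hA hb j k), by simp [hij, hjk]⟩ }

theorem div_apply_mem_fieldRange (hA : ∀ i, single i i (1 : F) ∈ A)
    (htr : ∀ a ∈ A, trace a ∈ (algebraMap K F).fieldRange) (hsp : A.IsSemiprime)
    {a b : Matrix ι ι F} (ha : a ∈ A) (hb : b ∈ A) {i j : ι} (hbij : b i j ≠ 0) :
    a i j / b i j ∈ (algebraMap K F).fieldRange := by
  obtain ⟨c, hc, hcji⟩ := exists_apply_ne_zero_swap hA hsp hb hbij
  rw [← mul_div_mul_right _ _ hcji]
  exact div_mem (mul_apply_mem_fieldRange hA htr ha hc i j)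
    (mul_apply_mem_fieldRange hA htr hb hc i j)

theorem exists_units_conj_apply_mem_fieldRange (hA : ∀ i, single i i (1 : F) ∈ A)
    (htr : ∀ a ∈ A, trace a ∈ (algebraMap K F).fieldRange) (hsp : A.IsSemiprime) :
    ∃ D : (Matrix ι ι F)ˣ, ∀ a ∈ A, ∀ i j,
      ((D : Matrix ι ι F) * a * (D⁻¹ : (Matrix ι ι F)ˣ)) i j ∈ (algebraMap K F).fieldRange := by
  let s := supportSetoid hA hsp
  let r : ι → ι := fun j => (⟦j⟧ : Quotient s).out
  have hr : ∀ j, ∃ c ∈ A, c (r j) j ≠ 0 := fun j => Quotient.mk_out (s := s) j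
  choose c hcA hc using hr
  let d : ι → Fˣ := fun j => Units.mk0 _ (hc j)
  refine ⟨⟨diagonal fun j => (d j : F), diagonal fun j => ((d j)⁻¹ : Fˣ), by simp, by simp⟩,
    fun a ha i j => ?_⟩
  simp only [Units.inv_mk, diagonal_mul, mul_diagonal]
  by_cases haij : a i j = 0
  · simp [haij]
  have hri : r i = r j := congrArg Quotient.out (Quotient.sound ⟨a, ha, haij⟩)
  have := div_apply_mem_fieldRange hA htr hsp
    (mul_mem (single_apply_mem_of_single_one_mem hA (hcA i) (r i) i) ha) (hcA j) (hc j)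
  simpa [d, single_mul_apply_same, hri, div_eq_mul_inv] using this

theorem trace_mem_fieldRange_of_mem_adjoin {G : Type*} [Monoid G] (u : G →* Matrix ι ι F)
    (htr : ∀ g, trace (u g) ∈ (algebraMap K F).fieldRange) {a : Matrix ι ι F}
    (ha : a ∈ Algebra.adjoin K (Set.range u)) : trace a ∈ (algebraMap K F).fieldRange := by
  rw [← Subalgebra.mem_toSubmodule, Algebra.adjoin_eq_span, ← MonoidHom.coe_mrange,
    Submonoid.closure_eq, MonoidHom.coe_mrange] at ha
  induction ha using Submodule.span_induction with
  | mem x hx => obtain ⟨g, rfl⟩ := hx; exact htr g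
  | zero => simp
  | add x y _ _ hx hy => rw [trace_add]; exact add_mem hx hy
  | smul c x _ hx => rw [trace_smul, Algebra.smul_def]; exact mul_mem ⟨c, rfl⟩ hx

theorem exists_units_conj_apply_mem_fieldRange_of_diagonal {G : Type*} [Monoid G]
    (u : G →* Matrix ι ι F) (htr : ∀ g, trace (u g) ∈ (algebraMap K F).fieldRange) {g₀ : G}
    {μ : ι → K} (hμ : Function.Injective μ)
    (hg₀ : u g₀ = diagonal fun i => algebraMap K F (μ i))
    (hsp : ∀ x ∈ Algebra.adjoin F (Set.range u), (∀ g, x * u g * x = 0) → x = 0) :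
    ∃ D : (Matrix ι ι F)ˣ, ∀ g i j,
      ((D : Matrix ι ι F) * u g * (D⁻¹ : (Matrix ι ι F)ˣ)) i j ∈ (algebraMap K F).fieldRange := by
  let A := Algebra.adjoin K (Set.range u)
  have huA : ∀ g, u g ∈ A := fun g => Algebra.subset_adjoin ⟨g, rfl⟩
  have hAF : A ≤ (Algebra.adjoin F (Set.range u)).restrictScalars K :=
    Algebra.adjoin_le Algebra.subset_adjoin
  have hsingle : ∀ i, single i i (1 : F) ∈ A := by
    have := huA g₀
    rw [hg₀] at this
    exact single_one_mem_of_diagonal_mem hμ this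
  obtain ⟨D, hD⟩ := exists_units_conj_apply_mem_fieldRange hsingle
    (fun a ha => trace_mem_fieldRange_of_mem_adjoin u htr ha)
    (fun x hx hxA => hsp x (hAF hx) fun g => hxA _ (huA g))
  exact ⟨D, fun g => hD _ (huA g)⟩

end Matrix

section Semisimple

variable {G : Type*} [Group G] {F : Type*} [Field F] {ι : Type*} [Fintype ι] [DecidableEq ι]

theorem MatRep.IsIrreducible.eq_zero_of_forall_mul_mul_eq_zero {ρ : G →* GL ι F}
    (hρ : MatRep.IsIrreducible ρ) {x : Matrix ι ι F} (hx : ∀ g, x * ρ g * x = 0) : x = 0 := by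
  let W : Submodule F (ι → F) := ⨅ g, LinearMap.ker (x * ρ g).mulVecLin
  have hW : ∀ v, v ∈ W ↔ ∀ g, (x * (ρ g : Matrix ι ι F)) *ᵥ v = 0 := by simp [W]
  have hWinv : ∀ g, ∀ v ∈ W, (ρ g : Matrix ι ι F) *ᵥ v ∈ W := fun g v hv =>
    (hW _).2 fun h => by rw [mulVec_mulVec, mul_assoc, ← Units.val_mul, ← map_mul, (hW v).1 hv]
  have hxW : ∀ v, x *ᵥ v ∈ W := fun v => (hW _).2 fun g => by rw [mulVec_mulVec, hx]; simp
  rcases hρ.2 W hWinv with hbot | htop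
  · refine ext_iff_mulVec.2 fun v => ?_
    simpa [hbot] using hxW v
  · refine ext_iff_mulVec.2 fun v => ?_
    simpa using (hW v).1 (htop ▸ Submodule.mem_top) 1

theorem eq_zero_of_mem_adjoin_of_forall_mul_mul_eq_zero {o : Type*} [Fintype o] [DecidableEq o]
    {m : o → Type*} [∀ i, Fintype (m i)] [∀ i, DecidableEq (m i)] {ρi : ∀ i, G →* GL (m i) F}
    (hρi : ∀ i, MatRep.IsIrreducible (ρi i)) (e : (Σ i, m i) ≃ ι) (N : GL ι F)
    {u : G → Matrix ι ι F}
    (hu : ∀ g, u g = N * reindex e e (blockDiagonal' fun i => (ρi i g : Matrix (m i) (m i) F)) *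
      (N⁻¹ : GL ι F))
    {x : Matrix ι ι F} (hx : x ∈ Algebra.adjoin F (Set.range u)) (hxu : ∀ g, x * u g * x = 0) :
    x = 0 := by
  let conjN := MulSemiringAction.toAlgEquiv F (Matrix ι ι F) (ConjAct.toConjAct N)
  let Φ : (∀ i, Matrix (m i) (m i) F) →ₐ[F] Matrix ι ι F :=
    (conjN.toAlgHom.comp (reindexAlgEquiv F F e).toAlgHom).comp
      (AlgHom.mk' (blockDiagonal'RingHom m F) fun c y => blockDiagonal'_smul c y)
  have hΦ : Function.Injective Φ := fun y z h =>
    blockDiagonal'_injective <| (reindexAlgEquiv F F e).injective <| conjN.injective h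
  have hΦu : ∀ g, u g = Φ fun i => ρi i g := fun g => by rw [hu]; rfl
  obtain ⟨y, rfl⟩ : x ∈ Φ.range :=
    Algebra.adjoin_le (by rintro _ ⟨g, rfl⟩; exact ⟨_, (hΦu g).symm⟩) hx
  have hyρy : ∀ g, y * (fun i => (ρi i g : Matrix (m i) (m i) F)) * y = 0 := fun g =>
    hΦ (by simpa [hΦu] using hxu g)
  have hy : y = 0 := funext fun i =>
    (hρi i).eq_zero_of_forall_mul_mul_eq_zero fun g => congr_fun (hyρy g) i
  simp [hy]

end Semisimple

theorem semisimple_defined_over_base_general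
    {G : Type*} [Group G] {K : Type*} [Field K] {n : ℕ}
    (ρ : G →* Matrix.GeneralLinearGroup (Fin n) (AlgebraicClosure K))
    (hss : ∃ (r : ℕ) (m : Fin r → ℕ)
      (ρi : (i : Fin r) → G →* Matrix.GeneralLinearGroup (Fin (m i)) (AlgebraicClosure K))
      (e : (Σ i : Fin r, Fin (m i)) ≃ Fin n)
      (M : Matrix.GeneralLinearGroup (Fin n) (AlgebraicClosure K)),
      (∀ i, MatRep.IsIrreducible (ρi i)) ∧
      ∀ g : G,
        (ρ g : Matrix (Fin n) (Fin n) (AlgebraicClosure K)) =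
          (M : Matrix (Fin n) (Fin n) (AlgebraicClosure K)) *
            (Matrix.reindex e e
              (Matrix.blockDiagonal' fun i =>
                ((ρi i g : Matrix (Fin (m i)) (Fin (m i)) (AlgebraicClosure K))))) *
            ((M⁻¹ : Matrix.GeneralLinearGroup (Fin n) (AlgebraicClosure K)) :
              Matrix (Fin n) (Fin n) (AlgebraicClosure K)))
    (htr : ∀ g : G,
      (ρ g : Matrix (Fin n) (Fin n) (AlgebraicClosure K)).trace ∈
        (algebraMap K (AlgebraicClosure K)).fieldRange)
    (g₀ : G)
    (hg₀ : ∃ roots : Fin n → AlgebraicClosure K, Function.Injective roots ∧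
      (∀ i, roots i ∈ (algebraMap K (AlgebraicClosure K)).fieldRange) ∧
      (ρ g₀ : Matrix (Fin n) (Fin n) (AlgebraicClosure K)).charpoly =
        ∏ i, (X - C (roots i))) :
    MatRep.IsDefinedOver ρ ((algebraMap K (AlgebraicClosure K)).fieldRange) := by
  obtain ⟨r, m, ρi, e, M, hirr, hρ⟩ := hss
  obtain ⟨μ, hμ, hμK, hcharpoly⟩ := hg₀
  choose ν hν using hμK
  obtain rfl := funext hν
  obtain ⟨P, hP⟩ := exists_units_conj_eq_diagonal (ρ g₀ : Matrix (Fin n) (Fin n) _) _ hμ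
    fun i => by simp [hcharpoly, eval_prod, Finset.prod_eq_zero_iff, sub_eq_zero]
  let u : G →* Matrix (Fin n) (Fin n) (AlgebraicClosure K) :=
    (Units.coeHom _).comp ((MulAut.conj P⁻¹).toMonoidHom.comp ρ)
  have hu : ∀ g, u g = (P⁻¹ : GL (Fin n) _) * ρ g * P := fun g => by simp [u]
  obtain ⟨D, hD⟩ := exists_units_conj_apply_mem_fieldRange_of_diagonal u
    (fun g => by rw [hu, trace_units_conj']; exact htr g) hμ.of_comp (by rw [hu, hP])
    fun x hx hxu => eq_zero_of_mem_adjoin_of_forall_mul_mul_eq_zero hirr e (P⁻¹ * M)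
      (fun g => by simp [hu, hρ, mul_assoc]) hx hxu
  refine ⟨D * P⁻¹, fun g i j => ?_⟩
  simpa [hu, mul_assoc] using hD g i j

/-- **Lemma (a semisimple representation with `K`-rational traces and a regular `K`-rational
element is defined over `K`).**  Here semisimplicity of `ρ : G → GLₙ(K̄)` is expressed by the
existence of a decomposition of `ρ`, up to conjugation, into a direct (block diagonal) sum of
irreducible representations. -/
theorem semisimple_defined_over_base
    {G : Type*} [Group G] {K : Type*} [Field K] [CharZero K] {n : ℕ}
    (ρ : G →* Matrix.GeneralLinearGroup (Fin n) (AlgebraicClosure K))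
    (hss : ∃ (r : ℕ) (m : Fin r → ℕ)
      (ρi : (i : Fin r) → G →* Matrix.GeneralLinearGroup (Fin (m i)) (AlgebraicClosure K))
      (e : (Σ i : Fin r, Fin (m i)) ≃ Fin n)
      (M : Matrix.GeneralLinearGroup (Fin n) (AlgebraicClosure K)),
      (∀ i, MatRep.IsIrreducible (ρi i)) ∧
      ∀ g : G,
        (ρ g : Matrix (Fin n) (Fin n) (AlgebraicClosure K)) =
          (M : Matrix (Fin n) (Fin n) (AlgebraicClosure K)) *
            (Matrix.reindex e e
              (Matrix.blockDiagonal' fun i =>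
                ((ρi i g : Matrix (Fin (m i)) (Fin (m i)) (AlgebraicClosure K))))) *
            ((M⁻¹ : Matrix.GeneralLinearGroup (Fin n) (AlgebraicClosure K)) :
              Matrix (Fin n) (Fin n) (AlgebraicClosure K)))
    (hfin : ∃ E : IntermediateField K (AlgebraicClosure K),
      FiniteDimensional K E ∧ MatRep.IsDefinedOver ρ E.toSubfield)
    (htr : ∀ g : G,
      (ρ g : Matrix (Fin n) (Fin n) (AlgebraicClosure K)).trace ∈
        (algebraMap K (AlgebraicClosure K)).fieldRange)
    (g₀ : G)
    (hg₀ : ∃ roots : Fin n → AlgebraicClosure K, Function.Injective roots ∧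
      (∀ i, roots i ∈ (algebraMap K (AlgebraicClosure K)).fieldRange) ∧
      (ρ g₀ : Matrix (Fin n) (Fin n) (AlgebraicClosure K)).charpoly =
        ∏ i, (X - C (roots i))) :
    MatRep.IsDefinedOver ρ ((algebraMap K (AlgebraicClosure K)).fieldRange) :=
  semisimple_defined_over_base_general ρ hss htr g₀ hg₀
end

section
/- Let F be a field of characteristic 0, let A ∈ GL_n(F) and A' ∈ GL_m(F) be invertible matrices, and let B be an n×n matrix and B' an m×m matrix over F. If there exists an integer N such that tr(A^s · B) = tr(A'^s · B') for every integer s ≥ N, then tr(A^s · B) = tr(A'^s · B') for every integer s ∈ ℤ (including negative integers and s = 0, the powers of invertible matrices being taken in GL). -/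
open Matrix Polynomial Finset

lemma trace_key {F : Type*} [Field F] {n : ℕ}
    (A : Matrix.GeneralLinearGroup (Fin n) F) (B : Matrix (Fin n) (Fin n) F)
    (p : Polynomial F) (hp : Polynomial.aeval (A : Matrix (Fin n) (Fin n) F) p = 0) (s : ℤ) :
    ∑ k ∈ Finset.range (p.natDegree + 1), p.coeff k *
      (((A ^ (s + (k : ℤ)) : Matrix.GeneralLinearGroup (Fin n) F) : Matrix (Fin n) (Fin n) F) * B).trace = 0 := by
  have hA : ∀ k : ℕ, ((A ^ (s + (k : ℤ)) : Matrix.GeneralLinearGroup (Fin n) F) : Matrix (Fin n) (Fin n) F) =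
      ((A ^ s : Matrix.GeneralLinearGroup (Fin n) F) : Matrix (Fin n) (Fin n) F) *
        ((A : Matrix (Fin n) (Fin n) F)) ^ k := by
    intro k
    rw [_root_.zpow_add, zpow_natCast, Units.val_mul, Units.val_pow_eq_pow_val]
  calc ∑ k ∈ Finset.range (p.natDegree + 1), p.coeff k *
      (((A ^ (s + (k : ℤ)) : Matrix.GeneralLinearGroup (Fin n) F) : Matrix (Fin n) (Fin n) F) * B).trace
      = (((A ^ s : Matrix.GeneralLinearGroup (Fin n) F) : Matrix (Fin n) (Fin n) F) *
          (∑ k ∈ Finset.range (p.natDegree + 1), p.coeff k • ((A : Matrix (Fin n) (Fin n) F)) ^ k) * B).trace := by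
        rw [Finset.mul_sum, Finset.sum_mul, Matrix.trace_sum]
        apply Finset.sum_congr rfl
        intro k _
        rw [hA k, Matrix.mul_smul, Matrix.smul_mul, Matrix.trace_smul, smul_eq_mul, mul_assoc]
      _ = 0 := by
        rw [← Polynomial.aeval_eq_sum_range, hp, mul_zero, zero_mul, Matrix.trace_zero]

/-- If `tr(Aˢ·B) = tr(A'ˢ·B')` for all sufficiently large integers `s`, then the equality holds
for every integer `s` (powers of the invertible matrices `A`, `A'` being taken in `GL`). -/
theorem trace_power_eq_of_eventually_eq
    {F : Type*} [Field F] [CharZero F] {n m : ℕ}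
    (A : Matrix.GeneralLinearGroup (Fin n) F) (A' : Matrix.GeneralLinearGroup (Fin m) F)
    (B : Matrix (Fin n) (Fin n) F) (B' : Matrix (Fin m) (Fin m) F)
    (h : ∃ N : ℤ, ∀ s : ℤ, N ≤ s →
      (((A ^ s : Matrix.GeneralLinearGroup (Fin n) F) : Matrix (Fin n) (Fin n) F) * B).trace =
      (((A' ^ s : Matrix.GeneralLinearGroup (Fin m) F) : Matrix (Fin m) (Fin m) F) * B').trace) :
    ∀ s : ℤ,
      (((A ^ s : Matrix.GeneralLinearGroup (Fin n) F) : Matrix (Fin n) (Fin n) F) * B).trace =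
      (((A' ^ s : Matrix.GeneralLinearGroup (Fin m) F) : Matrix (Fin m) (Fin m) F) * B').trace := by
  obtain ⟨N, h⟩ := h
  set p : Polynomial F :=
    (A : Matrix (Fin n) (Fin n) F).charpoly * (A' : Matrix (Fin m) (Fin m) F).charpoly with hpdef
  have hp1 : Polynomial.aeval (A : Matrix (Fin n) (Fin n) F) p = 0 := by
    rw [hpdef, _root_.map_mul, Matrix.aeval_self_charpoly, zero_mul]
  have hp2 : Polynomial.aeval (A' : Matrix (Fin m) (Fin m) F) p = 0 := by
    rw [hpdef, _root_.map_mul, Matrix.aeval_self_charpoly, mul_zero]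
  set g : ℤ → F := fun s =>
    (((A ^ s : Matrix.GeneralLinearGroup (Fin n) F) : Matrix (Fin n) (Fin n) F) * B).trace -
    (((A' ^ s : Matrix.GeneralLinearGroup (Fin m) F) : Matrix (Fin m) (Fin m) F) * B').trace
    with hgdef
  suffices hgoal : ∀ s : ℤ, g s = 0 by
    intro s
    have := hgoal s
    rw [hgdef] at this
    exact sub_eq_zero.mp this
  have hg0 : ∀ s : ℤ, N ≤ s → g s = 0 := fun s hs => sub_eq_zero.mpr (h s hs)
  have hrec : ∀ s : ℤ, ∑ k ∈ Finset.range (p.natDegree + 1), p.coeff k * g (s + k) = 0 := by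
    intro s
    have h1 := trace_key A B p hp1 s
    have h2 := trace_key A' B' p hp2 s
    simp only [hgdef, mul_sub]
    rw [Finset.sum_sub_distrib, h1, h2, sub_zero]
  have hc0 : p.coeff 0 ≠ 0 := by
    rw [hpdef, Polynomial.mul_coeff_zero]
    have d1 : (A : Matrix (Fin n) (Fin n) F).det ≠ 0 :=
      ((Matrix.isUnit_iff_isUnit_det _).mp A.isUnit).ne_zero
    have d2 : (A' : Matrix (Fin m) (Fin m) F).det ≠ 0 :=
      ((Matrix.isUnit_iff_isUnit_det _).mp A'.isUnit).ne_zero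
    rw [Matrix.det_eq_sign_charpoly_coeff] at d1 d2
    intro hc
    rcases mul_eq_zero.mp hc with hc | hc
    · exact d1 (by rw [hc, mul_zero])
    · exact d2 (by rw [hc, mul_zero])
  have key : ∀ t : ℕ, ∀ s : ℤ, N - t ≤ s → g s = 0 := by
    intro t
    induction t with
    | zero => intro s hs; exact hg0 s (by omega)
    | succ t ih =>
      intro s hs
      by_cases hcase : N - t ≤ s
      · exact ih s hcase
      · have h0 := hrec s
        rw [Finset.sum_range_succ'] at h0
        have hz : ∀ k ∈ Finset.range p.natDegree, p.coeff (k + 1) * g (s + ((k : ℕ) + 1 : ℕ)) = 0 := by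
          intro k _
          have : g (s + ((k : ℕ) + 1 : ℕ)) = 0 := by
            apply ih
            push_cast
            omega
          rw [this, mul_zero]
        rw [Finset.sum_eq_zero hz, zero_add] at h0
        have : g (s + (0 : ℕ)) = 0 := by
          rcases mul_eq_zero.mp h0 with hc | hc
          · exact absurd hc hc0
          · exact hc
        simpa using this
  intro s
  exact key (N - s).toNat s (by omega)
end
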